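/- Suppose g : [a,b] → ℝ is twice continuously differentiable and |g''(x)| ≥ λ > 0 for all x ∈ [a,b], with g'' of constant sign. Then |∫_a^b e(g(x)) dx| ≤ C/√λ for an absolute constant C (one may take C = 4). -/

import Mathlib

/-!
Integration by parts against `(e ∘ g)' = 2πi g' · (e ∘ g)` shows that on an interval where
`g'' ≥ 0` and `|g'| ≥ μ` the integral is at most `2/(πμ)`: each boundary term is at most
`1/(2πμ)`, and the remainder is at most `(1/2π) ∫ g''/g'² = (1/2π)(1/g'(c) - 1/g'(d)) ≤ 1/(πμ)`.
If `g'' ≥ λ`, then `g'` grows at rate `λ`, so `|g'| < √λ` only on an interval of length at most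
`2/√λ`. Bounding the integral trivially there and by the first estimate with `μ = √λ` on the two
remaining pieces gives `(2 + 4/π)/√λ ≤ 4/√λ`. The case `g'' < 0` follows by complex conjugation.
-/

open Set Real MeasureTheory intervalIntegral
open scoped ComplexConjugate

namespace VanDerCorput

noncomputable def e (x : ℝ) : ℂ := Complex.exp (2 * π * Complex.I * x)

lemma norm_e (x : ℝ) : ‖e x‖ = 1 := by
  rw [e, show 2 * π * Complex.I * x = ((2 * π * x : ℝ) : ℂ) * Complex.I by push_cast; ring]
  exact Complex.norm_exp_ofReal_mul_I _

lemma conj_e (x : ℝ) : conj (e x) = e (-x) := by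
  simp only [e, ← Complex.exp_conj, map_mul, Complex.conj_I, Complex.conj_ofReal, map_ofNat,
    Complex.ofReal_neg]
  ring_nf

lemma continuous_e : Continuous e := by
  unfold e; fun_prop

lemma hasDerivAt_e_comp {g : ℝ → ℝ} {g' x : ℝ} (hg : HasDerivAt g g' x) :
    HasDerivAt (fun y => e (g y)) (e (g x) * (2 * π * Complex.I * g')) x :=
  (hg.ofReal_comp.const_mul _).cexp

section FirstDerivativeTest

variable {g g' g'' : ℝ → ℝ} {c d μ : ℝ}

lemma hasDerivAt_e_comp_div_deriv {x : ℝ} (hg : HasDerivAt g (g' x) x)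
    (hg' : HasDerivAt g' (g'' x) x) (hx : g' x ≠ 0) :
    HasDerivAt (fun y => e (g y) / (2 * π * Complex.I * g' y))
      (e (g x) - e (g x) / (2 * π * Complex.I) * (g'' x / g' x ^ 2 : ℝ)) x := by
  have hK : (2 * π * Complex.I : ℂ) ≠ 0 := by simp [pi_ne_zero]
  have hx' : (g' x : ℂ) ≠ 0 := by exact_mod_cast hx
  refine ((hasDerivAt_e_comp hg).fun_div (hg'.ofReal_comp.const_mul (2 * π * Complex.I))
    (mul_ne_zero hK hx')).congr_deriv ?_
  push_cast
  field_simp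

lemma hasDerivAt_neg_inv {x : ℝ} (hg' : HasDerivAt g' (g'' x) x) (hx : g' x ≠ 0) :
    HasDerivAt (fun y => -(g' y)⁻¹) (g'' x / g' x ^ 2) x := by
  simpa [neg_div] using (hg'.fun_inv hx).fun_neg

lemma intervalIntegrable_div_sq_of_nonneg (hcd : c ≤ d) (hg'c : ContinuousOn g' (Icc c d))
    (hg' : ∀ x ∈ Ioo c d, HasDerivAt g' (g'' x) x) (hg'_ne : ∀ x ∈ Icc c d, g' x ≠ 0)
    (hg''_nonneg : ∀ x ∈ Ioo c d, 0 ≤ g'' x) :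
    IntervalIntegrable (fun x => g'' x / g' x ^ 2) volume c d :=
  (intervalIntegrable_iff_integrableOn_Ioc_of_le hcd).2 <|
    integrableOn_deriv_of_nonneg (hg'c.inv₀ hg'_ne).neg
      (fun x hx => hasDerivAt_neg_inv (hg' x hx) (hg'_ne x (Ioo_subset_Icc_self hx)))
      fun x hx => div_nonneg (hg''_nonneg x hx) (sq_nonneg _)

lemma integral_div_sq (hcd : c ≤ d) (hg'c : ContinuousOn g' (Icc c d))
    (hg' : ∀ x ∈ Ioo c d, HasDerivAt g' (g'' x) x) (hg'_ne : ∀ x ∈ Icc c d, g' x ≠ 0)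
    (hint : IntervalIntegrable (fun x => g'' x / g' x ^ 2) volume c d) :
    ∫ x in c..d, g'' x / g' x ^ 2 = (g' c)⁻¹ - (g' d)⁻¹ := by
  rw [integral_eq_sub_of_hasDerivAt_of_le hcd (hg'c.inv₀ hg'_ne).neg
    (fun x hx => hasDerivAt_neg_inv (hg' x hx) (hg'_ne x (Ioo_subset_Icc_self hx))) hint]
  simp only [Pi.neg_apply, Pi.inv_apply]
  ring

lemma integral_e_eq_boundary_add_remainder (hcd : c ≤ d) (hgc : ContinuousOn g (Icc c d))
    (hg'c : ContinuousOn g' (Icc c d)) (hg : ∀ x ∈ Ioo c d, HasDerivAt g (g' x) x)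
    (hg' : ∀ x ∈ Ioo c d, HasDerivAt g' (g'' x) x) (hg'_ne : ∀ x ∈ Icc c d, g' x ≠ 0)
    (hint : IntervalIntegrable (fun x => g'' x / g' x ^ 2) volume c d) :
    ∫ x in c..d, e (g x)
      = e (g d) / (2 * π * Complex.I * g' d) - e (g c) / (2 * π * Complex.I * g' c)
      + ∫ x in c..d, e (g x) / (2 * π * Complex.I) * (g'' x / g' x ^ 2 : ℝ) := by
  have hE : ContinuousOn (fun x => e (g x)) (Icc c d) := continuous_e.comp_continuousOn hgc
  have hrem : IntervalIntegrable
      (fun x => e (g x) / (2 * π * Complex.I) * (g'' x / g' x ^ 2 : ℝ)) volume c d :=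
    have hint_ofReal : IntervalIntegrable (fun x => ((g'' x / g' x ^ 2 : ℝ) : ℂ)) volume c d :=
      (intervalIntegrable_iff_integrableOn_Ioc_of_le hcd).2
        (by exact ((intervalIntegrable_iff_integrableOn_Ioc_of_le hcd).1 hint).ofReal)
    hint_ofReal.continuousOn_mul (by rw [uIcc_of_le hcd]; exact hE.div_const _)
  have hF : ContinuousOn (fun x => e (g x) / (2 * π * Complex.I * g' x)) (Icc c d) :=
    hE.div (continuousOn_const.mul (Complex.continuous_ofReal.comp_continuousOn hg'c))
      fun x hx => mul_ne_zero (by simp [pi_ne_zero]) (by exact_mod_cast hg'_ne x hx)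
  have := integral_eq_sub_of_hasDerivAt_of_le hcd hF
    (fun x hx => hasDerivAt_e_comp_div_deriv (hg x hx) (hg' x hx)
      (hg'_ne x (Ioo_subset_Icc_self hx)))
    ((hE.intervalIntegrable_of_Icc hcd).sub hrem)
  rw [integral_sub (hE.intervalIntegrable_of_Icc hcd) hrem] at this
  linear_combination this

theorem norm_integral_e_le_of_le_abs_deriv (hcd : c ≤ d) (hμ : 0 < μ)
    (hgc : ContinuousOn g (Icc c d)) (hg'c : ContinuousOn g' (Icc c d))
    (hg : ∀ x ∈ Ioo c d, HasDerivAt g (g' x) x) (hg' : ∀ x ∈ Ioo c d, HasDerivAt g' (g'' x) x)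
    (hg''_nonneg : ∀ x ∈ Ioo c d, 0 ≤ g'' x) (hμg' : ∀ x ∈ Ioo c d, μ ≤ |g' x|) :
    ‖∫ x in c..d, e (g x)‖ ≤ 2 / (π * μ) := by
  rcases hcd.eq_or_lt with rfl | hcd'
  · simp only [integral_same, norm_zero]; positivity
  have hμg'_Icc : ∀ x ∈ Icc c d, μ ≤ |g' x| := fun x hx =>
    ContinuousWithinAt.closure_le (f := fun _ => μ) (g := fun y => |g' y|)
      (by rwa [closure_Ioo hcd'.ne]) continuousWithinAt_const
      ((hg'c x hx).mono Ioo_subset_Icc_self).abs hμg'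
  have hg'_ne : ∀ x ∈ Icc c d, g' x ≠ 0 := fun x hx => abs_pos.1 (hμ.trans_le (hμg'_Icc x hx))
  have hinv_le : ∀ x ∈ Icc c d, |(g' x)⁻¹| ≤ 1 / μ := fun x hx => by
    rw [abs_inv, ← one_div]; exact one_div_le_one_div_of_le hμ (hμg'_Icc x hx)
  have hint := intervalIntegrable_div_sq_of_nonneg hcd hg'c hg' hg'_ne hg''_nonneg
  set K : ℂ := 2 * π * Complex.I
  have hnormK : ‖K‖ = 2 * π := by simp [K, abs_of_pos pi_pos]
  have hboundary : ∀ x ∈ Icc c d, ‖e (g x) / (K * g' x)‖ ≤ 1 / (2 * π * μ) := fun x hx => by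
    rw [norm_div, norm_e, norm_mul, hnormK, Complex.norm_real, Real.norm_eq_abs]
    exact one_div_le_one_div_of_le (by positivity) (by gcongr; exact hμg'_Icc x hx)
  have hremainder : ‖∫ x in c..d, e (g x) / K * (g'' x / g' x ^ 2 : ℝ)‖ ≤ 1 / (π * μ) :=
    calc ‖∫ x in c..d, e (g x) / K * (g'' x / g' x ^ 2 : ℝ)‖
        ≤ ∫ x in c..d, 1 / (2 * π) * (g'' x / g' x ^ 2) := by
          refine norm_integral_le_of_norm_le hcd ?_ (hint.const_mul _)
          -- `g'' ≥ 0` is only known on `Ioo c d`; the endpoint `d` is a null set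
          filter_upwards [measure_eq_zero_iff_ae_notMem.1 (measure_singleton d)] with x hxd hx
          rw [norm_mul, norm_div, norm_e, hnormK, Complex.norm_real, Real.norm_of_nonneg
            (div_nonneg (hg''_nonneg x ⟨hx.1, hx.2.lt_of_ne hxd⟩) (sq_nonneg _))]
      _ = 1 / (2 * π) * ((g' c)⁻¹ - (g' d)⁻¹) := by
          rw [intervalIntegral.integral_const_mul, integral_div_sq hcd hg'c hg' hg'_ne hint]
      _ ≤ 1 / (2 * π) * (1 / μ + 1 / μ) := by
          gcongr
          linarith [abs_le.1 (hinv_le c (left_mem_Icc.2 hcd)),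
            abs_le.1 (hinv_le d (right_mem_Icc.2 hcd))]
      _ = 1 / (π * μ) := by field_simp; ring
  rw [integral_e_eq_boundary_add_remainder hcd hgc hg'c hg hg' hg'_ne hint]
  calc _ ≤ ‖e (g d) / (K * g' d)‖ + ‖e (g c) / (K * g' c)‖
        + ‖∫ x in c..d, e (g x) / K * (g'' x / g' x ^ 2 : ℝ)‖ :=
        (norm_add_le _ _).trans (by gcongr; exact norm_sub_le _ _)
    _ ≤ 2 / (π * μ) := by
        have h := add_le_add (hboundary d (right_mem_Icc.2 hcd)) (hboundary c (left_mem_Icc.2 hcd))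
        rw [show 2 / (π * μ) = 1 / (2 * π * μ) + 1 / (2 * π * μ) + 1 / (π * μ) by
          field_simp; ring]
        linarith

end FirstDerivativeTest

lemma exists_mul_abs_sub_le_abs {f : ℝ → ℝ} {a b lam : ℝ} (hab : a ≤ b)
    (hf : ContinuousOn f (Icc a b)) (hmono : MonotoneOn (fun x => f x - lam * x) (Icc a b)) :
    ∃ x₀ ∈ Icc a b, ∀ x ∈ Icc a b, lam * |x - x₀| ≤ |f x| := by
  have right : ∀ x₀ ∈ Icc a b, 0 ≤ f x₀ → ∀ x ∈ Icc a b, x₀ ≤ x → lam * |x - x₀| ≤ |f x| :=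
    fun x₀ hx₀ hf₀ x hx hle => by
      have := hmono hx₀ hx hle
      rw [abs_of_nonneg (sub_nonneg.2 hle)]
      linarith [le_abs_self (f x)]
  have left : ∀ x₀ ∈ Icc a b, f x₀ ≤ 0 → ∀ x ∈ Icc a b, x ≤ x₀ → lam * |x - x₀| ≤ |f x| :=
    fun x₀ hx₀ hf₀ x hx hle => by
      have := hmono hx hx₀ hle
      rw [abs_of_nonpos (sub_nonpos.2 hle)]
      linarith [neg_abs_le (f x)]
  by_cases ha : 0 ≤ f a
  · exact ⟨a, left_mem_Icc.2 hab, fun x hx => right a (left_mem_Icc.2 hab) ha x hx hx.1⟩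
  by_cases hb : f b ≤ 0
  · exact ⟨b, right_mem_Icc.2 hab, fun x hx => left b (right_mem_Icc.2 hab) hb x hx hx.2⟩
  obtain ⟨x₀, hx₀, hfx₀⟩ := intermediate_value_Icc hab hf ⟨(not_le.1 ha).le, (not_le.1 hb).le⟩
  refine ⟨x₀, hx₀, fun x hx => ?_⟩
  rcases le_total x₀ x with hle | hle
  exacts [right x₀ hx₀ hfx₀.ge x hx hle, left x₀ hx₀ hfx₀.le x hx hle]

lemma monotoneOn_sub_mul_of_le_deriv {f f' : ℝ → ℝ} {a b lam : ℝ}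
    (hf : ContinuousOn f (Icc a b)) (hf' : ∀ x ∈ Ioo a b, HasDerivAt f (f' x) x)
    (hlam : ∀ x ∈ Ioo a b, lam ≤ f' x) : MonotoneOn (fun x => f x - lam * x) (Icc a b) := by
  refine monotoneOn_of_hasDerivWithinAt_nonneg (f' := fun x => f' x - lam) (convex_Icc a b)
    (hf.sub (continuousOn_const.mul continuousOn_id)) (fun x hx => ?_) fun x hx => ?_
  all_goals rw [interior_Icc] at hx
  · simpa using ((hf' x hx).fun_sub ((hasDerivAt_id x).const_mul lam)).hasDerivWithinAt
  · simpa using hlam x hx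

lemma norm_integral_le_of_three_subintervals {E : Type*} [NormedAddCommGroup E] [NormedSpace ℝ E]
    {f : ℝ → E} {a b c d : ℝ} (hac : a ≤ c) (hcd : c ≤ d) (hdb : d ≤ b)
    (hf : ContinuousOn f (Icc a b)) :
    ‖∫ x in a..b, f x‖ ≤ ‖∫ x in a..c, f x‖ + ‖∫ x in c..d, f x‖ + ‖∫ x in d..b, f x‖ := by
  have hint {u v : ℝ} (hau : a ≤ u) (huv : u ≤ v) (hvb : v ≤ b) :
      IntervalIntegrable f volume u v :=
    (hf.mono (Icc_subset_Icc hau hvb)).intervalIntegrable_of_Icc huv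
  rw [← integral_add_adjacent_intervals (hint le_rfl (hac.trans hcd) hdb)
      (hint (hac.trans hcd) hdb le_rfl),
    ← integral_add_adjacent_intervals (hint le_rfl hac (hcd.trans hdb)) (hint hac hcd hdb)]
  exact norm_add₃_le

theorem norm_integral_e_le_of_le_second_deriv {g g' g'' : ℝ → ℝ} {a b lam : ℝ} (hab : a ≤ b)
    (hlam : 0 < lam) (hgc : ContinuousOn g (Icc a b)) (hg'c : ContinuousOn g' (Icc a b))
    (hg : ∀ x ∈ Ioo a b, HasDerivAt g (g' x) x) (hg' : ∀ x ∈ Ioo a b, HasDerivAt g' (g'' x) x)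
    (hlow : ∀ x ∈ Ioo a b, lam ≤ g'' x) :
    ‖∫ x in a..b, e (g x)‖ ≤ 4 / √lam := by
  obtain ⟨x₀, hx₀, hgrowth⟩ :=
    exists_mul_abs_sub_le_abs hab hg'c (monotoneOn_sub_mul_of_le_deriv hg'c hg' hlow)
  set δ := √lam
  have hδ : 0 < δ := sqrt_pos.2 hlam
  have hδsq : δ ^ 2 = lam := sq_sqrt hlam.le
  have hδ_le : ∀ x ∈ Icc a b, 1 / δ ≤ |x - x₀| → δ ≤ |g' x| := fun x hx h =>
    calc δ = lam * (1 / δ) := by rw [← hδsq]; field_simp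
      _ ≤ lam * |x - x₀| := by gcongr
      _ ≤ |g' x| := hgrowth x hx
  have hδinv : 0 < 1 / δ := one_div_pos.2 hδ
  -- `|g'| < δ` only on `(x₀ - 1/δ, x₀ + 1/δ)`
  set c := max a (x₀ - 1 / δ)
  set d := min b (x₀ + 1 / δ)
  have hac : a ≤ c := le_max_left _ _
  have hcd : c ≤ d := max_le (le_min hab (by linarith [hx₀.1]))
    (le_min (by linarith [hx₀.2]) (by linarith))
  have hdb : d ≤ b := min_le_left _ _
  have hpiece {u v : ℝ} (hau : a ≤ u) (huv : u ≤ v) (hvb : v ≤ b)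
      (hδg' : ∀ x ∈ Ioo u v, δ ≤ |g' x|) : ‖∫ x in u..v, e (g x)‖ ≤ 2 / (π * δ) :=
    have hsub : Ioo u v ⊆ Ioo a b := Ioo_subset_Ioo hau hvb
    norm_integral_e_le_of_le_abs_deriv huv hδ (hgc.mono (Icc_subset_Icc hau hvb))
      (hg'c.mono (Icc_subset_Icc hau hvb)) (fun x hx => hg x (hsub hx))
      (fun x hx => hg' x (hsub hx)) (fun x hx => hlam.le.trans (hlow x (hsub hx))) hδg'
  have hleft : ‖∫ x in a..c, e (g x)‖ ≤ 2 / (π * δ) := by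
    refine hpiece le_rfl hac (hcd.trans hdb) fun x hx => ?_
    have hx' : x < x₀ - 1 / δ := (lt_max_iff.1 hx.2).resolve_left hx.1.not_gt
    refine hδ_le x ⟨hx.1.le, by linarith [hx₀.2]⟩ ?_
    rw [abs_sub_comm, abs_of_pos (by linarith)]
    linarith
  have hright : ‖∫ x in d..b, e (g x)‖ ≤ 2 / (π * δ) := by
    refine hpiece (hac.trans hcd) hdb le_rfl fun x hx => ?_
    have hx' : x₀ + 1 / δ < x := (min_lt_iff.1 hx.1).resolve_left hx.2.not_gt
    refine hδ_le x ⟨by linarith [hx₀.1], hx.2.le⟩ ?_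
    rw [abs_of_pos (by linarith)]
    linarith
  have hmid : ‖∫ x in c..d, e (g x)‖ ≤ 2 / δ :=
    calc ‖∫ x in c..d, e (g x)‖ ≤ 1 * |d - c| :=
          norm_integral_le_of_norm_le_const fun x _ => (norm_e _).le
      _ ≤ 2 / δ := by
          rw [one_mul, abs_of_nonneg (sub_nonneg.2 hcd)]
          linarith [min_le_right b (x₀ + 1 / δ), le_max_right a (x₀ - 1 / δ),
            show 2 / δ = 2 * (1 / δ) by ring]
  have hπ : 2 / (π * δ) ≤ 1 / δ := by
    rw [div_le_div_iff₀ (by positivity) hδ]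
    nlinarith [pi_gt_three]
  calc ‖∫ x in a..b, e (g x)‖
      ≤ ‖∫ x in a..c, e (g x)‖ + ‖∫ x in c..d, e (g x)‖ + ‖∫ x in d..b, e (g x)‖ :=
        norm_integral_le_of_three_subintervals hac hcd hdb (continuous_e.comp_continuousOn hgc)
    _ ≤ 4 / δ := by linarith [show 4 / δ = 1 / δ + 2 / δ + 1 / δ by ring]

end VanDerCorput

open VanDerCorput

theorem second_derivative_test_general
    (a b : ℝ) (hab : a ≤ b) (g g' g'' : ℝ → ℝ) (lam : ℝ) (hlam : 0 < lam)
    (hg : ∀ x ∈ Icc a b, HasDerivWithinAt g (g' x) (Icc a b) x)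
    (hg' : ∀ x ∈ Icc a b, HasDerivWithinAt g' (g'' x) (Icc a b) x)
    (hsign : (∀ x ∈ Icc a b, 0 < g'' x) ∨ (∀ x ∈ Icc a b, g'' x < 0))
    (hlow : ∀ x ∈ Icc a b, lam ≤ |g'' x|) :
    ‖(∫ x in a..b, Complex.exp (2 * Real.pi * Complex.I * (g x : ℂ)))‖
      ≤ 4 / Real.sqrt lam := by
  have hgc : ContinuousOn g (Icc a b) := fun x hx => (hg x hx).continuousWithinAt
  have hg'c : ContinuousOn g' (Icc a b) := fun x hx => (hg' x hx).continuousWithinAt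
  have hasDerivAt_of_Icc {f f' : ℝ → ℝ} (hf : ∀ x ∈ Icc a b, HasDerivWithinAt f (f' x) (Icc a b) x)
      (x : ℝ) (hx : x ∈ Ioo a b) : HasDerivAt f (f' x) x :=
    (hf x (Ioo_subset_Icc_self hx)).hasDerivAt (Icc_mem_nhds hx.1 hx.2)
  change ‖∫ x in a..b, e (g x)‖ ≤ 4 / √lam
  rcases hsign with hpos | hneg
  · refine norm_integral_e_le_of_le_second_deriv hab hlam hgc hg'c (hasDerivAt_of_Icc hg)
      (hasDerivAt_of_Icc hg') fun x hx => ?_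
    simpa [abs_of_pos (hpos x (Ioo_subset_Icc_self hx))] using hlow x (Ioo_subset_Icc_self hx)
  · have := norm_integral_e_le_of_le_second_deriv (g := fun x => -g x) (g' := fun x => -g' x)
      (g'' := fun x => -g'' x) hab hlam hgc.neg hg'c.neg
      (fun x hx => (hasDerivAt_of_Icc hg x hx).neg) (fun x hx => (hasDerivAt_of_Icc hg' x hx).neg)
      fun x hx => ?_
    · simpa only [← conj_e, intervalIntegral_conj, Complex.norm_conj] using this
    simpa [abs_of_neg (hneg x (Ioo_subset_Icc_self hx))] using hlow x (Ioo_subset_Icc_self hx)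

/-- van der Corput second derivative test: If `g` is C² on `[a,b]` with
`g''` of constant sign and `|g''| ≥ λ > 0`, then `|∫_a^b e(g(x)) dx| ≤ 4/√λ`. -/
theorem second_derivative_test
    (a b : ℝ) (hab : a ≤ b) (g g' g'' : ℝ → ℝ) (lam : ℝ) (hlam : 0 < lam)
    (hg : ∀ x ∈ Icc a b, HasDerivWithinAt g (g' x) (Icc a b) x)
    (hg' : ∀ x ∈ Icc a b, HasDerivWithinAt g' (g'' x) (Icc a b) x)
    (hcont : ContinuousOn g'' (Icc a b))
    (hsign : (∀ x ∈ Icc a b, 0 < g'' x) ∨ (∀ x ∈ Icc a b, g'' x < 0))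
    (hlow : ∀ x ∈ Icc a b, lam ≤ |g'' x|) :
    ‖(∫ x in a..b, Complex.exp (2 * Real.pi * Complex.I * (g x : ℂ)))‖
      ≤ 4 / Real.sqrt lam :=
  second_derivative_test_general a b hab g g' g'' lam hlam hg hg' hsign hlow
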